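/- (Oort–Peters intersection Q1·Q2 = P + 3P1.) The set of common zeros of Q1 and Q2 in ℙ²(ℂ) is exactly {P, P1}. Moreover, at P1 the gradient vectors ∇Q1(1,0,1) and ∇Q2(1,0,1) are both nonzero and proportional (the two conics are tangent at P1), while at P the gradients ∇Q1(3,0,2) and ∇Q2(3,0,2) are not proportional (the conics meet transversally at P). -/

import Mathlib

noncomputable section

open MvPolynomial

/-- The polynomial ring `ℂ[x,y,z]`. -/
abbrev R3 : Type := MvPolynomial (Fin 3) ℂ

def x : R3 := X 0
def y : R3 := X 1
def z : R3 := X 2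

/-- The Oort–Peters conic `Q1 = y² + 2x² − 2xy − 5xz + 2yz + 3z²`. -/
def Q1 : R3 := y^2 + 2*x^2 - 2*x*y - 5*x*z + 2*y*z + 3*z^2
/-- The Oort–Peters conic `Q2 = y² + 2x² + 2xy − 5xz − 2yz + 3z²`. -/
def Q2 : R3 := y^2 + 2*x^2 + 2*x*y - 5*x*z - 2*y*z + 3*z^2
/-- The Oort–Peters cubic `C1 = y²z + x³ − 4x²z + 3xz²`. -/
def C1 : R3 := y^2*z + x^3 - 4*x^2*z + 3*x*z^2
/-- The Oort–Peters cubic `C2 = 2y²z − xy² + 4x²z − 12xz² + 9z³`. -/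
def C2 : R3 := 2*y^2*z - x*y^2 + 4*x^2*z - 12*x*z^2 + 9*z^3

/-- `i√3`. -/
def s3 : ℂ := Complex.I * Real.sqrt 3

/-- Coordinate representative of `P = [3:0:2]` (i.e. `[3/2:0:1]`). -/
def P : Fin 3 → ℂ := ![3, 0, 2]
/-- Coordinate representative of `P1 = [1:0:1]`. -/
def P1 : Fin 3 → ℂ := ![1, 0, 1]
/-- Coordinate representative of `P2 = [3+i√3 : 3+i√3 : 2]`. -/
def P2 : Fin 3 → ℂ := ![3+s3, 3+s3, 2]
/-- Coordinate representative of `P3 = [3−i√3 : 3−i√3 : 2]`. -/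
def P3 : Fin 3 → ℂ := ![3-s3, 3-s3, 2]
/-- Coordinate representative of `P4 = [3+i√3 : −3−i√3 : 2]`. -/
def P4 : Fin 3 → ℂ := ![3+s3, -3-s3, 2]
/-- Coordinate representative of `P5 = [3−i√3 : −3+i√3 : 2]`. -/
def P5 : Fin 3 → ℂ := ![3-s3, -3+s3, 2]
/-- Coordinate representative of `∞ = [0:1:0]`. -/
def Pinf : Fin 3 → ℂ := ![0, 1, 0]

/-- The gradient vector of `G` at the point `v ∈ ℂ³`. -/
def grad (G : R3) (v : Fin 3 → ℂ) : Fin 3 → ℂ := fun i => eval v (pderiv i G)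

/-- The common zero locus of `G` and `H` in `ℙ²(ℂ)` is exactly the set of points with
coordinate representatives in the list `reps`. -/
def CommonZerosExactly (G H : R3) (reps : List (Fin 3 → ℂ)) : Prop :=
  (∀ w ∈ reps, eval w G = 0 ∧ eval w H = 0) ∧
  ∀ v : Fin 3 → ℂ, v ≠ 0 → eval v G = 0 → eval v H = 0 →
    ∃ t : ℂ, t ≠ 0 ∧ ∃ w ∈ reps, v = t • w

/-- The curves `{G = 0}` and `{H = 0}` are tangent at the point with representative
`v`: both gradients are nonzero and they are proportional. -/
def TangentAt (G H : R3) (v : Fin 3 → ℂ) : Prop :=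
  grad G v ≠ 0 ∧ grad H v ≠ 0 ∧ ∃ t : ℂ, t ≠ 0 ∧ grad H v = t • grad G v

lemma eval_Q1 (v : Fin 3 → ℂ) :
    eval v Q1 = v 1 ^ 2 + 2 * v 0 ^ 2 - 2 * v 0 * v 1 - 5 * v 0 * v 2 + 2 * v 1 * v 2
      + 3 * v 2 ^ 2 := by
  simp [Q1, x, y, z]

lemma eval_Q2 (v : Fin 3 → ℂ) :
    eval v Q2 = v 1 ^ 2 + 2 * v 0 ^ 2 + 2 * v 0 * v 1 - 5 * v 0 * v 2 - 2 * v 1 * v 2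
      + 3 * v 2 ^ 2 := by
  simp [Q2, x, y, z]

lemma pderiv_ofNat {σ R : Type*} [CommSemiring R] (i : σ) (n : ℕ) [n.AtLeastTwo] :
    pderiv i (no_index (OfNat.ofNat n) : MvPolynomial σ R) = 0 := by
  rw [← map_ofNat (C : R →+* MvPolynomial σ R) n]
  exact pderiv_C

lemma grad_Q1 (v : Fin 3 → ℂ) :
    grad Q1 v = ![4 * v 0 - 2 * v 1 - 5 * v 2, 2 * v 1 - 2 * v 0 + 2 * v 2,
      -5 * v 0 + 2 * v 1 + 6 * v 2] := by
  funext i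
  fin_cases i <;>
    · simp [grad, Q1, x, y, z, pderiv_X, pderiv_ofNat]
      ring

lemma grad_Q2 (v : Fin 3 → ℂ) :
    grad Q2 v = ![4 * v 0 + 2 * v 1 - 5 * v 2, 2 * v 1 + 2 * v 0 - 2 * v 2,
      -5 * v 0 - 2 * v 1 + 6 * v 2] := by
  funext i
  fin_cases i <;>
    · simp [grad, Q2, x, y, z, pderiv_X, pderiv_ofNat]
      ring

lemma exists_smul_eq_of_minors_eq_zero {ι K : Type*} [Field K] {v w : ι → K} (i : ι)
    (hv : v ≠ 0) (hw : w i ≠ 0) (h : ∀ j, v j * w i = v i * w j) :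
    ∃ t : K, t ≠ 0 ∧ v = t • w := by
  have hvw : v = (v i / w i) • w := by
    funext j
    simp only [Pi.smul_apply, smul_eq_mul]
    field_simp
    exact h j
  refine ⟨v i / w i, fun ht => hv ?_, hvw⟩
  rw [hvw, ht, zero_smul]

/-- `Q2 - Q1 = 4y(x - z)`, while `Q1 = (2x - 3z)(x - z)` on `y = 0` and `Q1 = y²` on `x = z`. -/
lemma eq_zero_and_of_eval_Q1_Q2 {v : Fin 3 → ℂ} (h1 : eval v Q1 = 0) (h2 : eval v Q2 = 0) :
    v 1 = 0 ∧ (2 * v 0 = 3 * v 2 ∨ v 0 = v 2) := by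
  rw [eval_Q1] at h1
  rw [eval_Q2] at h2
  have hy : v 1 = 0 := by
    rcases mul_eq_zero.mp (show v 1 * (v 0 - v 2) = 0 by linear_combination (h2 - h1) / 4)
      with hy | hxz
    · exact hy
    · exact pow_eq_zero_iff two_ne_zero |>.mp <| by
        linear_combination h1 - (2 * v 0 - 3 * v 2 - 2 * v 1) * hxz
  refine ⟨hy, ?_⟩
  rcases mul_eq_zero.mp (show (2 * v 0 - 3 * v 2) * (v 0 - v 2) = 0 by
      linear_combination h1 + (2 * v 0 - 2 * v 2 - v 1) * hy) with hP | hP1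
  · exact .inl (by linear_combination hP)
  · exact .inr (by linear_combination hP1)

lemma commonZerosExactly_Q1_Q2 : CommonZerosExactly Q1 Q2 [P, P1] := by
  refine ⟨?_, fun v hv h1 h2 => ?_⟩
  · simp only [List.mem_cons, List.not_mem_nil, or_false]
    rintro w (rfl | rfl) <;> simp [eval_Q1, eval_Q2, P, P1] <;> norm_num
  obtain ⟨hy, hP | hP1⟩ := eq_zero_and_of_eval_Q1_Q2 h1 h2
  · obtain ⟨t, ht, rfl⟩ := exists_smul_eq_of_minors_eq_zero 2 hv (by simp [P] : P 2 ≠ 0)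
      (by intro j; fin_cases j <;> simp [P, hy]; linear_combination hP)
    exact ⟨t, ht, P, by simp, rfl⟩
  · obtain ⟨t, ht, rfl⟩ := exists_smul_eq_of_minors_eq_zero 2 hv (by simp [P1] : P1 2 ≠ 0)
      (by intro j; fin_cases j <;> simp [P1, hy]; linear_combination hP1)
    exact ⟨t, ht, P1, by simp, rfl⟩

lemma grad_Q1_P1 : grad Q1 P1 = ![-1, 0, 1] := by
  rw [grad_Q1]; simp [P1]; norm_num

lemma grad_Q2_P1 : grad Q2 P1 = ![-1, 0, 1] := by
  rw [grad_Q2]; simp [P1]; norm_num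

lemma tangentAt_Q1_Q2_P1 : TangentAt Q1 Q2 P1 := by
  have hne : (![-1, 0, 1] : Fin 3 → ℂ) ≠ 0 := fun h => by simpa using congrFun h 2
  rw [TangentAt, grad_Q1_P1, grad_Q2_P1]
  exact ⟨hne, hne, 1, one_ne_zero, (one_smul ℂ _).symm⟩

lemma grad_Q1_P : grad Q1 P = ![2, -2, -3] := by
  rw [grad_Q1]; simp [P]; norm_num

lemma grad_Q2_P : grad Q2 P = ![2, 2, -3] := by
  rw [grad_Q2]; simp [P]; norm_num

lemma linearIndependent_grad_Q1_Q2_P : LinearIndependent ℂ ![grad Q1 P, grad Q2 P] := by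
  rw [grad_Q1_P, grad_Q2_P, LinearIndependent.pair_iff]
  intro s t hst
  have h0 := congrFun hst 0
  have h1 := congrFun hst 1
  simp only [Pi.add_apply, Pi.smul_apply, smul_eq_mul, Pi.zero_apply] at h0 h1
  norm_num at h0 h1
  exact ⟨by linear_combination (h0 - h1) / 4, by linear_combination (h0 + h1) / 4⟩

/-- `Q1·Q2 = P + 3P1`: the conics meet exactly at `P` and `P1`; they are
tangent at `P1` and transversal at `P`. -/
theorem OP_conics_intersection :
    CommonZerosExactly Q1 Q2 [P, P1] ∧
    TangentAt Q1 Q2 P1 ∧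
    LinearIndependent ℂ ![grad Q1 P, grad Q2 P] :=
  ⟨commonZerosExactly_Q1_Q2, tangentAt_Q1_Q2_P1, linearIndependent_grad_Q1_Q2_P⟩
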